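/- arXiv:1812.01069 — 6 statements merged into one kernel-verified Lean document; each statement's English description precedes it below -/
import Mathlib

section
/- There is no quantifier-free linear arithmetic formula (equivalently, no finite union of convex subsets of ℚ^2) that contains all points (n, n^2) for positive even integers n and contains no point of the form ((n+m)/2, (n^2+m^2)/2) with n, m distinct positive even integers. -/
theorem stmt_7 (r : ℕ) (C : Fin r → Set (ℚ × ℚ)) (hC : ∀ i, Convex ℚ (C i))
    (hcover : ∀ n : ℤ, 0 < n → Even n → ((n : ℚ), (n : ℚ) ^ 2) ∈ ⋃ i, C i) :
    ∃ n m : ℤ, 0 < n ∧ 0 < m ∧ Even n ∧ Even m ∧ n ≠ m ∧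
      (((n : ℚ) + (m : ℚ)) / 2, ((n : ℚ) ^ 2 + (m : ℚ) ^ 2) / 2) ∈ ⋃ i, C i := by
  have hmem : ∀ k : Fin (r+1), ∃ i : Fin r,
      (((2 * ((k : ℤ) + 1) : ℤ) : ℚ), ((2 * ((k : ℤ) + 1) : ℤ) : ℚ) ^ 2) ∈ C i := by
    intro k
    have := hcover (2 * ((k : ℤ) + 1)) (by positivity) ⟨(k : ℤ) + 1, by ring⟩
    simpa using this
  choose f hf using hmem
  have hlt : Fintype.card (Fin r) < Fintype.card (Fin (r+1)) := by simp
  obtain ⟨k, l, hkl, hfe⟩ := Fintype.exists_ne_map_eq_of_card_lt f hlt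
  set n : ℤ := 2 * ((k : ℤ) + 1)
  set m : ℤ := 2 * ((l : ℤ) + 1)
  refine ⟨n, m, by positivity, by positivity, ⟨(k : ℤ) + 1, by ring⟩, ⟨(l : ℤ) + 1, by ring⟩,
    ?_, ?_⟩
  · intro h
    apply hkl
    have : (k : ℤ) = (l : ℤ) := by omega
    exact Fin.ext (by exact_mod_cast this)
  · have h1 := hf k
    have h2 := hf l
    rw [hfe] at h1
    have := hC (f l) h1 h2 (by norm_num : (0:ℚ) ≤ 1/2) (by norm_num : (0:ℚ) ≤ 1/2)
      (by norm_num)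
    refine Set.mem_iUnion.2 ⟨f l, ?_⟩
    convert this using 2
    · simp only [n, m, Prod.fst_add, Prod.smul_fst, smul_eq_mul]
      push_cast
      ring
    · simp only [n, m, Prod.snd_add, Prod.smul_snd, smul_eq_mul]
      push_cast
      ring
end

section
/- Let Prog be the transition system with state (pc, x, z1, z2, y1, y2) ∈ {0,1,2,3} × ℤ^5, initial states pc=0 ∧ x>0 ∧ z1=x ∧ z2=2x ∧ y1=0 ∧ y2=0, and transitions: from pc ∈ {0,1}: if z1>0 then z1'=z1−1, y1'=y1+x, pc'=1 (other variables unchanged); if z1≤0 then pc'=2 (variables unchanged); from pc=2: if z2>0 then z2'=z2−1, y2'=y2+x, pc'=2; if z2≤0 then pc'=3. Then every reachable state with pc=3 satisfies y2 = 2·y1. -/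
structure ProgState where
  pc : ℤ
  x : ℤ
  z1 : ℤ
  z2 : ℤ
  y1 : ℤ
  y2 : ℤ

def ProgInit (s : ProgState) : Prop :=
  s.pc = 0 ∧ 0 < s.x ∧ s.z1 = s.x ∧ s.z2 = 2 * s.x ∧ s.y1 = 0 ∧ s.y2 = 0

def ProgStep (s t : ProgState) : Prop :=
  ((s.pc = 0 ∨ s.pc = 1) ∧ 0 < s.z1 ∧
    t.pc = 1 ∧ t.x = s.x ∧ t.z1 = s.z1 - 1 ∧ t.z2 = s.z2 ∧ t.y1 = s.y1 + s.x ∧ t.y2 = s.y2) ∨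
  ((s.pc = 0 ∨ s.pc = 1) ∧ s.z1 ≤ 0 ∧
    t.pc = 2 ∧ t.x = s.x ∧ t.z1 = s.z1 ∧ t.z2 = s.z2 ∧ t.y1 = s.y1 ∧ t.y2 = s.y2) ∨
  (s.pc = 2 ∧ 0 < s.z2 ∧
    t.pc = 2 ∧ t.x = s.x ∧ t.z1 = s.z1 ∧ t.z2 = s.z2 - 1 ∧ t.y1 = s.y1 ∧ t.y2 = s.y2 + s.x) ∨
  (s.pc = 2 ∧ s.z2 ≤ 0 ∧
    t.pc = 3 ∧ t.x = s.x ∧ t.z1 = s.z1 ∧ t.z2 = s.z2 ∧ t.y1 = s.y1 ∧ t.y2 = s.y2)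

def ProgReachable (s : ProgState) : Prop :=
  ∃ s0 : ProgState, ProgInit s0 ∧ Relation.ReflTransGen ProgStep s0 s

def ProgInv (s : ProgState) : Prop :=
  0 < s.x ∧
  ((s.pc = 0 ∨ s.pc = 1) → s.y1 = (s.x - s.z1) * s.x ∧ s.y2 = 0 ∧ s.z2 = 2 * s.x ∧ 0 ≤ s.z1) ∧
  (s.pc = 2 → s.y1 = s.x * s.x ∧ s.y2 = (2 * s.x - s.z2) * s.x ∧ 0 ≤ s.z2) ∧
  (s.pc = 3 → s.y2 = 2 * s.y1)

lemma proginv_init (s : ProgState) (h : ProgInit s) : ProgInv s := by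
  obtain ⟨h0, hx, h1, h2, h3, h4⟩ := h
  refine ⟨hx, fun _ => ⟨?_, h4, h2, by omega⟩, fun hp => by omega, fun hp => by omega⟩
  rw [h1, h3]; ring

lemma proginv_step (s t : ProgState) (hi : ProgInv s) (h : ProgStep s t) : ProgInv t := by
  obtain ⟨hx, i1, i2, i3⟩ := hi
  rcases h with ⟨hp, hz, e1, e2, e3, e4, e5, e6⟩ | ⟨hp, hz, e1, e2, e3, e4, e5, e6⟩ |
    ⟨hp, hz, e1, e2, e3, e4, e5, e6⟩ | ⟨hp, hz, e1, e2, e3, e4, e5, e6⟩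
  · obtain ⟨h1, h2, h3, h4⟩ := i1 hp
    refine ⟨by omega, fun _ => ⟨?_, by omega, by omega, by omega⟩,
      fun hq => by omega, fun hq => by omega⟩
    rw [e5, e2, e3, h1]; ring
  · obtain ⟨h1, h2, h3, h4⟩ := i1 hp
    have hz1 : s.z1 = 0 := by omega
    refine ⟨by omega, fun hq => by omega, fun _ => ⟨?_, ?_, by omega⟩, fun hq => by omega⟩
    · rw [e5, e2, h1, hz1]; ring
    · rw [e6, h2, e4, e2, h3]; ring
  · obtain ⟨h1, h2, h3⟩ := i2 hp
    refine ⟨by omega, fun hq => by omega, fun _ => ⟨?_, ?_, by omega⟩, fun hq => by omega⟩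
    · rw [e5, e2, h1]
    · rw [e6, h2, e4, e2]; ring
  · obtain ⟨h1, h2, h3⟩ := i2 hp
    have hz2 : s.z2 = 0 := by omega
    refine ⟨by omega, fun hq => by omega, fun hq => by omega, fun _ => ?_⟩
    rw [e6, e5, h1, h2, hz2]; ring

lemma proginv_reach (s : ProgState) (hs : ProgReachable s) : ProgInv s := by
  obtain ⟨s0, h0, hr⟩ := hs
  induction hr with
  | refl => exact proginv_init s0 h0
  | tail _ hst ih => exact proginv_step _ _ ih hst

theorem stmt_11 (s : ProgState) (hs : ProgReachable s) (hpc : s.pc = 3) :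
    s.y2 = 2 * s.y1 := (proginv_reach s hs).2.2.2 hpc
end

section
/- In the transition system Prog (as defined), for every n > 0 the state (pc, x, z1, z2, y1, y2) = (2, n, 0, 2n, n^2, 0) is reachable. -/
theorem stmt_12 (n : ℤ) (hn : 0 < n) :
    ProgReachable ⟨2, n, 0, 2 * n, n ^ 2, 0⟩ := by
  refine ⟨⟨0, n, n, 2 * n, 0, 0⟩, ⟨rfl, hn, rfl, rfl, rfl, rfl⟩, ?_⟩
  have key : ∀ k : ℕ, (k : ℤ) ≤ n →
      ∃ p : ℤ, (p = 0 ∨ p = 1) ∧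
        Relation.ReflTransGen ProgStep ⟨0, n, n, 2 * n, 0, 0⟩
          ⟨p, n, n - k, 2 * n, k * n, 0⟩ := by
    intro k
    induction k with
    | zero => intro _; exact ⟨0, Or.inl rfl, by simpa using Relation.ReflTransGen.refl⟩
    | succ m ih =>
      intro hk
      have hm : (m : ℤ) ≤ n := by push_cast at hk ⊢; omega
      obtain ⟨p, hp, hr⟩ := ih hm
      refine ⟨1, Or.inr rfl, hr.tail ?_⟩
      left
      refine ⟨hp, by push_cast at hk ⊢; omega, rfl, rfl, ?_, rfl, ?_, rfl⟩ <;>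
        push_cast <;> ring
  obtain ⟨m, hm⟩ := Int.eq_ofNat_of_zero_le hn.le
  obtain ⟨p, hp, hr⟩ := key m (by omega)
  have h1 : Relation.ReflTransGen ProgStep ⟨0, n, n, 2 * n, 0, 0⟩
      ⟨2, n, 0, 2 * n, n ^ 2, 0⟩ := by
    refine hr.tail ?_
    right; left
    refine ⟨hp, by simp only; omega, rfl, rfl, by simp only; omega, rfl, ?_, rfl⟩
    simp only
    rw [hm]; push_cast; ring
  exact h1
end

section
/- In the transition system Prog (as defined), starting from state (pc, x, z1, z2, y1, y2) = (2, (n+m)/2, 0, n+m, (n^2+m^2)/2, 0) with n, m distinct positive even integers, a state with pc = 3 and y2 ≠ 2·y1 is reachable. -/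
lemma loop_run (x z1 y1 : ℤ) : ∀ (k : ℕ) (y2 : ℤ),
    Relation.ReflTransGen ProgStep ⟨2, x, z1, (k : ℤ), y1, y2⟩ ⟨2, x, z1, 0, y1, y2 + k * x⟩
  | 0, y2 => by simpa using Relation.ReflTransGen.refl
  | (k+1), y2 => by
    refine Relation.ReflTransGen.head (b := ⟨2, x, z1, (k : ℤ), y1, y2 + x⟩) ?_ ?_
    · refine Or.inr (Or.inr (Or.inl ?_))
      refine ⟨rfl, by positivity, rfl, rfl, rfl, by push_cast; ring, rfl, rfl⟩
    · have h := loop_run x z1 y1 k (y2 + x)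
      convert h using 2
      push_cast; ring

theorem stmt_13 (n m : ℤ) (hn : 0 < n) (hm : 0 < m) (hen : Even n) (hem : Even m)
    (hnm : n ≠ m) :
    ∃ s' : ProgState,
      Relation.ReflTransGen ProgStep
        ⟨2, (n + m) / 2, 0, n + m, (n ^ 2 + m ^ 2) / 2, 0⟩ s' ∧
      s'.pc = 3 ∧ s'.y2 ≠ 2 * s'.y1 := by
  obtain ⟨a, ha⟩ := hen
  obtain ⟨b, hb⟩ := hem
  have ha' : a > 0 := by omega
  have hb' : b > 0 := by omega
  have hx : (n + m) / 2 = a + b := by omega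
  have hy : (n ^ 2 + m ^ 2) / 2 = 2*a^2 + 2*b^2 := by subst ha hb; ring_nf; omega
  refine ⟨⟨3, (n+m)/2, 0, 0, (n^2+m^2)/2, (n+m) * ((n+m)/2)⟩, ?_, rfl, ?_⟩
  · have hk : ∃ k : ℕ, (k : ℤ) = n + m := ⟨(n+m).toNat, by omega⟩
    obtain ⟨k, hk⟩ := hk
    refine Relation.ReflTransGen.trans (b := ⟨2, (n+m)/2, 0, 0, (n^2+m^2)/2, (n+m)*((n+m)/2)⟩) ?_ (Relation.ReflTransGen.single ?_)
    · have h := loop_run ((n+m)/2) 0 ((n^2+m^2)/2) k 0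
      rw [hk] at h
      simpa using h
    · exact Or.inr (Or.inr (Or.inr ⟨rfl, le_refl 0, rfl, rfl, rfl, rfl, rfl, rfl⟩))
  · simp only [ne_eq]
    rw [hx, hy]
    have : a ≠ b := by omega
    intro h
    rw [ha, hb] at h
    have h2 : a - b ≠ 0 := sub_ne_zero.mpr this
    nlinarith [sq_pos_of_ne_zero h2]
end

section
/- For the transition system Prog (as defined), there is no inductive invariant given as a finite union of convex subsets of the state space ℚ^6 that is integer-closed; i.e., no set I that is a finite union of convex sets, contains all initial states, is closed under transitions, and is contained in the safety property (pc=3 → y2=2y1). -/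
noncomputable def embQ (s : ProgState) : Fin 6 → ℚ :=
  ![(s.pc : ℚ), (s.x : ℚ), (s.z1 : ℚ), (s.z2 : ℚ), (s.y1 : ℚ), (s.y2 : ℚ)]

open Relation

theorem Relation.ReflTransGen.invariant {α : Type*} {r : α → α → Prop} {P : α → Prop}
    (hP : ∀ a b, P a → r a b → P b) {a b : α} (hab : ReflTransGen r a b) (ha : P a) : P b := by
  induction hab with
  | refl => exact ha
  | tail _ hbc ih => exact hP _ _ ih hbc

theorem reflTransGen_progStep_firstLoop (n : ℕ) (s : ProgState) (hpc : s.pc = 0 ∨ s.pc = 1)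
    (hz : s.z1 = n) :
    ReflTransGen ProgStep s ⟨2, s.x, 0, s.z2, s.y1 + n * s.x, s.y2⟩ := by
  induction n generalizing s with
  | zero => exact .single (Or.inr (Or.inl ⟨hpc, by omega, rfl, rfl, by simpa using hz.symm,
      rfl, by simp, rfl⟩))
  | succ n ih =>
    have step : ProgStep s ⟨1, s.x, s.z1 - 1, s.z2, s.y1 + s.x, s.y2⟩ :=
      Or.inl ⟨hpc, by omega, rfl, rfl, rfl, rfl, rfl, rfl⟩
    refine .head step ?_
    convert ih ⟨1, s.x, s.z1 - 1, s.z2, s.y1 + s.x, s.y2⟩ (Or.inr rfl) (by simp [hz]) using 2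
    push_cast
    ring

theorem reflTransGen_progStep_secondLoop (n : ℕ) (s : ProgState) (hpc : s.pc = 2)
    (hz : s.z2 = n) :
    ReflTransGen ProgStep s ⟨3, s.x, s.z1, 0, s.y1, s.y2 + n * s.x⟩ := by
  induction n generalizing s with
  | zero => exact .single (Or.inr (Or.inr (Or.inr ⟨hpc, by omega, rfl, rfl, rfl,
      by simpa using hz.symm, rfl, by simp⟩)))
  | succ n ih =>
    have step : ProgStep s ⟨2, s.x, s.z1, s.z2 - 1, s.y1, s.y2 + s.x⟩ :=
      Or.inr (Or.inr (Or.inl ⟨hpc, by omega, rfl, rfl, rfl, rfl, rfl, rfl⟩))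
    refine .head step ?_
    convert ih ⟨2, s.x, s.z1, s.z2 - 1, s.y1, s.y2 + s.x⟩ rfl (by simp [hz]) using 2
    push_cast
    ring

theorem reflTransGen_progStep_init_loopHead {a : ℤ} (ha : 0 ≤ a) :
    ReflTransGen ProgStep ⟨0, a, a, 2 * a, 0, 0⟩ ⟨2, a, 0, 2 * a, a * a, 0⟩ := by
  lift a to ℕ using ha
  simpa using reflTransGen_progStep_firstLoop a ⟨0, a, a, 2 * a, 0, 0⟩ (.inl rfl) rfl

theorem reflTransGen_progStep_loopHead_exit {a : ℤ} (y : ℤ) (ha : 0 ≤ a) :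
    ReflTransGen ProgStep ⟨2, a, 0, 2 * a, y, 0⟩ ⟨3, a, 0, 0, y, 2 * a * a⟩ := by
  lift a to ℕ using ha
  simpa using reflTransGen_progStep_secondLoop (2 * a) ⟨2, a, 0, 2 * a, y, 0⟩ rfl (by simp)

theorem embQ_mem_of_midpoint {C : Set (Fin 6 → ℚ)} (hC : Convex ℚ C) {s t u : ProgState}
    (hs : embQ s ∈ C) (ht : embQ t ∈ C) (hpc : 2 * u.pc = s.pc + t.pc) (hx : 2 * u.x = s.x + t.x)
    (hz1 : 2 * u.z1 = s.z1 + t.z1) (hz2 : 2 * u.z2 = s.z2 + t.z2)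
    (hy1 : 2 * u.y1 = s.y1 + t.y1) (hy2 : 2 * u.y2 = s.y2 + t.y2) : embQ u ∈ C := by
  convert hC hs ht (a := 1 / 2) (b := 1 / 2) (by norm_num) (by norm_num) (by norm_num) using 1
  qify at hpc hx hz1 hz2 hy1 hy2
  ext i
  fin_cases i <;> simp [embQ] <;> linarith

theorem stmt_14 :
    ¬ ∃ (r : ℕ) (C : Fin r → Set (Fin 6 → ℚ)),
      (∀ i, Convex ℚ (C i)) ∧
      (∀ s : ProgState, ProgInit s → embQ s ∈ ⋃ i, C i) ∧
      (∀ s t : ProgState, embQ s ∈ ⋃ i, C i → ProgStep s t → embQ t ∈ ⋃ i, C i) ∧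
      (∀ s : ProgState, embQ s ∈ ⋃ i, C i → s.pc = 3 → s.y2 = 2 * s.y1) := by
  rintro ⟨r, C, hconv, hinit, hstep, hsafe⟩
  have hloopHead (a : ℤ) (ha : 0 < a) : embQ ⟨2, a, 0, 2 * a, a * a, 0⟩ ∈ ⋃ i, C i :=
    (reflTransGen_progStep_init_loopHead ha.le).invariant hstep (hinit _ ⟨rfl, ha, rfl, rfl, rfl, rfl⟩)
  -- Loop-head states with even `x`, so that the midpoint of two of them is again an integer state.
  choose piece hpiece using fun n : ℕ ↦ Set.mem_iUnion.mp (hloopHead (2 * (n + 1)) (by positivity))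
  obtain ⟨m, n, hmn, hpiece_eq⟩ := Finite.exists_ne_map_eq_of_infinite piece
  have hmid : embQ ⟨2, m + n + 2, 0, 2 * (m + n + 2), 2 * ((m + 1) ^ 2 + (n + 1) ^ 2), 0⟩ ∈
      ⋃ i, C i :=
    Set.mem_iUnion.mpr ⟨piece m, embQ_mem_of_midpoint (hconv _) (hpiece m)
      (hpiece_eq ▸ hpiece n) (by ring) (by ring) (by ring) (by ring) (by ring) (by ring)⟩
  have hexit := (reflTransGen_progStep_loopHead_exit _ (by positivity)).invariant hstep hmid
  have hsq : 2 * ((m : ℤ) - n) ^ 2 = 0 := by linear_combination -(hsafe _ hexit rfl)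
  exact hmn (by simpa [sub_eq_zero] using hsq)
end

section
/- For any integer t and distinct even integers n, m with t/3 < n, m < t, executing the second loop of Prog from the state (pc, x, z1, z2, y1, y2) = (2, (n+m)/2, 0, (3/2)(n+m)−t, (n^2+m^2)/2, (n+m)t/2 − (n^2+m^2)/2) terminates in a state with pc = 3 and y2 = (n^2+m^2)/4 + (3/2)mn, which differs from 2·y1 = n^2+m^2. -/
lemma loop2 (x z1 : ℤ) : ∀ k : ℕ, ∀ y1 y2 : ℤ,
    Relation.ReflTransGen ProgStep ⟨2, x, z1, (k : ℤ), y1, y2⟩ ⟨3, x, z1, 0, y1, y2 + k * x⟩ := by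
  intro k
  induction k with
  | zero =>
    intro y1 y2
    have h : ProgStep ⟨2, x, z1, (0:ℕ), y1, y2⟩ ⟨3, x, z1, 0, y1, y2 + (0:ℕ) * x⟩ := by
      right; right; right; simp
    exact Relation.ReflTransGen.single h
  | succ k ih =>
    intro y1 y2
    have h : ProgStep ⟨2, x, z1, ((k+1 : ℕ) : ℤ), y1, y2⟩ ⟨2, x, z1, (k : ℤ), y1, y2 + x⟩ := by
      right; right; left
      refine ⟨rfl, by positivity, rfl, rfl, rfl, by push_cast; ring, rfl, rfl⟩
    have h2 := ih y1 (y2 + x)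
    have : y2 + x + k * x = y2 + (k+1 : ℕ) * x := by push_cast; ring
    rw [this] at h2
    exact Relation.ReflTransGen.head h h2

theorem stmt_18 (t n m : ℤ) (hnm : n ≠ m) (hen : Even n) (hem : Even m)
    (hn1 : (t : ℚ) / 3 < (n : ℚ)) (hn2 : (n : ℚ) < (t : ℚ))
    (hm1 : (t : ℚ) / 3 < (m : ℚ)) (hm2 : (m : ℚ) < (t : ℚ)) :
    ∃ s' : ProgState,
      Relation.ReflTransGen ProgStep
        ⟨2, (n + m) / 2, 0, (3 * (n + m)) / 2 - t,
          (n ^ 2 + m ^ 2) / 2, (n + m) * t / 2 - (n ^ 2 + m ^ 2) / 2⟩ s' ∧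
      s'.pc = 3 ∧
      s'.y2 = (n ^ 2 + m ^ 2) / 4 + 3 * m * n / 2 ∧
      2 * s'.y1 = n ^ 2 + m ^ 2 ∧
      s'.y2 ≠ 2 * s'.y1 := by
  obtain ⟨a, ha⟩ := hen
  obtain ⟨b, hb⟩ := hem
  have htn : t < 3 * n := by
    have := (div_lt_iff₀ (by norm_num : (0:ℚ) < 3)).mp hn1
    have h' : t < n * 3 := by exact_mod_cast this
    linarith
  have htm : t < 3 * m := by
    have := (div_lt_iff₀ (by norm_num : (0:ℚ) < 3)).mp hm1
    have h' : t < m * 3 := by exact_mod_cast this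
    linarith
  -- k = 3(a+b) - t ≥ 0
  have hk : 0 ≤ 3 * (a + b) - t := by omega
  set k : ℕ := (3 * (a + b) - t).toNat with hkdef
  have hkz : (k : ℤ) = 3 * (a + b) - t := Int.toNat_of_nonneg hk
  have h1 : (n + m) / 2 = a + b := by omega
  have h2 : (3 * (n + m)) / 2 - t = (k : ℤ) := by rw [hkz]; omega
  have h3 : (n ^ 2 + m ^ 2) / 2 = 2 * a ^ 2 + 2 * b ^ 2 := by
    have : n ^ 2 + m ^ 2 = 2 * (2 * a ^ 2 + 2 * b ^ 2) := by subst ha hb; ring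
    omega
  have h4 : (n + m) * t / 2 = (a + b) * t := by
    have : (n + m) * t = 2 * ((a + b) * t) := by subst ha hb; ring
    omega
  refine ⟨⟨3, a + b, 0, 0, 2 * a ^ 2 + 2 * b ^ 2,
    ((a + b) * t - (2 * a ^ 2 + 2 * b ^ 2)) + k * (a + b)⟩, ?_, rfl, ?_, ?_, ?_⟩
  · have := loop2 (a + b) 0 k (2 * a ^ 2 + 2 * b ^ 2) ((a + b) * t - (2 * a ^ 2 + 2 * b ^ 2))
    rw [h1, h2, h3, h4]
    exact this
  · show _ = _
    rw [hkz]
    have e1 : (n ^ 2 + m ^ 2) / 4 = a ^ 2 + b ^ 2 := by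
      have : n ^ 2 + m ^ 2 = 4 * (a ^ 2 + b ^ 2) := by subst ha hb; ring
      omega
    have e2 : 3 * m * n / 2 = 6 * a * b := by
      have : 3 * m * n = 2 * (6 * a * b) := by subst ha hb; ring
      omega
    rw [e1, e2]; ring
  · show 2 * (2 * a ^ 2 + 2 * b ^ 2) = n ^ 2 + m ^ 2
    subst ha hb; ring
  · show _ ≠ _
    rw [hkz]
    intro h
    apply hnm
    simp only at h
    have : a = b := by nlinarith [sq_nonneg (a - b)]
    omega
end
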